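/- Let 𝕋 = ℝ/ℤ, let α ∈ 𝕋 be irrational, let f : 𝕋 → ℝ be continuous, and define S : 𝕋 × ℝ → 𝕋 × ℝ by S(x,y) = (x+α, y+f(x)). If F ⊆ 𝕋 × ℝ is a nonempty compact S-invariant set such that the restricted system (F, S) is minimal, then there exists a continuous function g : 𝕋 → ℝ such that F = {(x, g(x)) : x ∈ 𝕋} and f(x) = g(x+α) − g(x) for all x ∈ 𝕋. -/

import Mathlib

notation "𝕋" => AddCircle (1 : ℝ)

instance : Fact ((0 : ℝ) < 1) := ⟨one_pos⟩

/-- The skew product `S(x, y) = (x + α, y + f x)` on `𝕋 × ℝ`, as a bijection. -/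
noncomputable def skewR (α : 𝕋) (f : 𝕋 → ℝ) : Equiv.Perm (𝕋 × ℝ) where
  toFun p := (p.1 + α, p.2 + f p.1)
  invFun p := (p.1 - α, p.2 - f (p.1 - α))
  left_inv p := by simp
  right_inv p := by simp

/-- Integer multiples of an irrational element are dense in the circle. -/
lemma dense_zmul_aux (α : 𝕋) (hα : ∀ q : ℚ, α ≠ ((q : ℝ) : 𝕋)) :
    Dense (Set.range fun n : ℤ => n • α) := by
  obtain ⟨a, rfl⟩ : ∃ a : ℝ, (a : 𝕋) = α := Quotient.exists_rep α
  set S := AddSubgroup.closure ({a, 1} : Set ℝ) with hS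
  rcases S.dense_or_cyclic with hd | ⟨b, hb⟩
  · have hmk : Continuous ((↑) : ℝ → 𝕋) := continuous_quotient_mk'
    have himg : ((↑) : ℝ → 𝕋) '' S ⊆ Set.range fun n : ℤ => n • ((a : ℝ) : 𝕋) := by
      rintro _ ⟨x, hx, rfl⟩
      rw [SetLike.mem_coe, hS, AddSubgroup.mem_closure_pair] at hx
      obtain ⟨m, n, rfl⟩ := hx
      refine ⟨m, ?_⟩
      have h10 : ((1 : ℝ) : 𝕋) = 0 := by
        simpa using AddCircle.coe_period (p := (1 : ℝ))
      simp only [QuotientAddGroup.mk_add, QuotientAddGroup.mk_zsmul, h10, smul_zero, add_zero]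
    have hD : Dense (((↑) : ℝ → 𝕋) '' S) := by
      rw [dense_iff_closure_eq, Set.eq_univ_iff_forall]
      intro z
      obtain ⟨x, rfl⟩ : ∃ x : ℝ, (x : 𝕋) = z := Quotient.exists_rep z
      have hx : (x : 𝕋) ∈ ((↑) : ℝ → 𝕋) '' closure (S : Set ℝ) :=
        ⟨x, by rw [hd.closure_eq]; trivial, rfl⟩
      exact (image_closure_subset_closure_image hmk) hx
    exact hD.mono himg
  · exfalso
    have ha : a ∈ S := AddSubgroup.subset_closure (by simp)
    have h1 : (1 : ℝ) ∈ S := AddSubgroup.subset_closure (by simp)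
    rw [hb, AddSubgroup.mem_closure_singleton] at ha h1
    obtain ⟨m, hm⟩ := ha
    obtain ⟨n, hn⟩ := h1
    have hn0 : (n : ℝ) ≠ 0 := by
      rintro h
      rw [Int.cast_eq_zero] at h
      subst h
      simp at hn
    have hb' : b = 1 / n := by
      field_simp
      rw [mul_comm]
      rw [zsmul_eq_mul] at hn
      linarith
    apply hα ((m : ℚ) / (n : ℚ))
    have hma : a = (m : ℝ) / (n : ℝ) := by
      rw [zsmul_eq_mul] at hm
      rw [hb'] at hm
      field_simp at hm ⊢
      linarith
    rw [hma]
    push_cast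
    ring_nf

/-- A set invariant under a permutation is invariant under its integer powers. -/
lemma zpow_mem_of_invariant {S : Equiv.Perm (𝕋 × ℝ)} {A : Set (𝕋 × ℝ)}
    (hA : ⇑S '' A = A) (n : ℤ) : ∀ p ∈ A, (S ^ n) p ∈ A := by
  have hfwd : ∀ p ∈ A, S p ∈ A := fun p hp => hA ▸ ⟨p, hp, rfl⟩
  have hbwd : ∀ p ∈ A, S⁻¹ p ∈ A := by
    intro p hp
    rw [← hA] at hp
    obtain ⟨q, hq, rfl⟩ := hp
    simpa using hq
  induction n using Int.induction_on with
  | zero => simpa using fun p hp => hp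
  | succ n ih =>
    intro p hp
    rw [zpow_add_one, Equiv.Perm.mul_apply]
    exact ih _ (hfwd p hp)
  | pred n ih =>
    intro p hp
    rw [zpow_sub_one, Equiv.Perm.mul_apply]
    exact ih _ (hbwd p hp)

/-- First coordinate of iterates of the skew product. -/
lemma fst_zpow_aux (α : 𝕋) (f : 𝕋 → ℝ) (n : ℤ) :
    ∀ p : 𝕋 × ℝ, ((skewR α f ^ n) p).1 = p.1 + n • α := by
  induction n using Int.induction_on with
  | zero => simp
  | succ n ih =>
    intro p
    rw [zpow_add_one, Equiv.Perm.mul_apply, ih]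
    show (p.1 + α) + (n : ℤ) • α = p.1 + ((n : ℤ) + 1) • α
    rw [add_smul, one_smul]
    abel
  | pred n ih =>
    intro p
    rw [zpow_sub_one, Equiv.Perm.mul_apply, ih]
    have h1 : ((skewR α f)⁻¹ p).1 = p.1 - α := rfl
    rw [h1, sub_smul, one_smul]
    abel

/-- Let `α ∈ 𝕋` be irrational, `f : 𝕋 → ℝ` continuous and
`S(x,y) = (x + α, y + f x)` on `𝕋 × ℝ`.  If `F` is a nonempty compact `S`-invariant set
such that `(F, S)` is minimal (every `S`-orbit in `F` is dense in `F`), then there is a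
continuous `g : 𝕋 → ℝ` with `F = {(x, g x) : x ∈ 𝕋}` and `f x = g (x + α) - g x` for all
`x`. -/
theorem graph_of_minimal_skew
    (α : 𝕋) (hα : ∀ q : ℚ, α ≠ ((q : ℝ) : 𝕋))
    (f : 𝕋 → ℝ) (hf : Continuous f)
    (F : Set (𝕋 × ℝ)) (hFc : IsCompact F) (hFne : F.Nonempty)
    (hFinv : ⇑(skewR α f) '' F = F)
    (hFmin : ∀ p ∈ F, closure (Set.range fun n : ℤ => ((skewR α f) ^ n) p) = F) :
    ∃ g : 𝕋 → ℝ, Continuous g ∧ F = Set.range (fun x : 𝕋 => (x, g x)) ∧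
      ∀ x : 𝕋, f x = g (x + α) - g x := by
  set S := skewR α f with hSdef
  -- every fiber is nonempty
  have hfiber_ne : ∀ x : 𝕋, ∃ y : ℝ, (x, y) ∈ F := by
    intro x
    obtain ⟨p₀, hp₀⟩ := hFne
    have hP : IsCompact (Prod.fst '' F) := hFc.image continuous_fst
    have hPclosed : IsClosed (Prod.fst '' F) := hP.isClosed
    have horb : Set.range (fun n : ℤ => p₀.1 + n • α) ⊆ Prod.fst '' F := by
      rintro _ ⟨n, rfl⟩
      exact ⟨(S ^ n) p₀, zpow_mem_of_invariant hFinv n p₀ hp₀, fst_zpow_aux α f n p₀⟩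
    have hdense : Dense (Set.range fun n : ℤ => p₀.1 + n • α) := by
      have h1 : DenseRange (fun n : ℤ => n • α) := dense_zmul_aux α hα
      have h2 : DenseRange (fun t : 𝕋 => p₀.1 + t) :=
        (Homeomorph.addLeft p₀.1).surjective.denseRange
      have := h2.comp h1 (Homeomorph.addLeft p₀.1).continuous
      exact this
    have hP_univ : Prod.fst '' F = Set.univ := by
      apply Set.eq_univ_of_univ_subset
      calc Set.univ = closure (Set.range fun n : ℤ => p₀.1 + n • α) := hdense.closure_eq.symm
        _ ⊆ closure (Prod.fst '' F) := closure_mono horb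
        _ = Prod.fst '' F := hPclosed.closure_eq
    have : x ∈ Prod.fst '' F := hP_univ ▸ Set.mem_univ x
    obtain ⟨p, hp, hpx⟩ := this
    exact ⟨p.2, by rwa [← hpx, Prod.mk.eta]⟩
  -- the fibers are singletons
  have huniq : ∀ x : 𝕋, ∀ y y' : ℝ, (x, y) ∈ F → (x, y') ∈ F → y = y' := by
    intro x y y' hy hy'
    by_contra hne
    set c := y' - y with hc
    have hc0 : c ≠ 0 := sub_ne_zero.mpr (Ne.symm hne)
    set T : 𝕋 × ℝ → 𝕋 × ℝ := fun p => (p.1, p.2 + c) with hT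
    set A := T '' F with hA
    have hTcont : Continuous T := by
      apply Continuous.prodMk continuous_fst
      exact continuous_snd.add continuous_const
    have hAc : IsCompact A := hFc.image hTcont
    have hAclosed : IsClosed A := hAc.isClosed
    have hAinv : ⇑S '' A = A := by
      have hcomm : ∀ p : 𝕋 × ℝ, S (T p) = T (S p) := by
        intro p
        show ((p.1 + α, p.2 + c + f p.1) : 𝕋 × ℝ) = (p.1 + α, p.2 + f p.1 + c)
        rw [Prod.mk.injEq]
        constructor
        · rfl
        · ring
      have him : (⇑S ∘ T) = (T ∘ ⇑S) := funext hcomm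
      calc ⇑S '' A = ⇑S '' (T '' F) := by rw [hA]
        _ = (⇑S ∘ T) '' F := (Set.image_comp _ _ _).symm
        _ = (T ∘ ⇑S) '' F := by rw [him]
        _ = T '' (⇑S '' F) := Set.image_comp _ _ _
        _ = A := by rw [hFinv]
    have hy'A : (x, y') ∈ A := ⟨(x, y), hy, by simp [hT, hc]⟩
    have hFsubA : F ⊆ A := by
      have horbA : Set.range (fun n : ℤ => (S ^ n) (x, y')) ⊆ A := by
        rintro _ ⟨n, rfl⟩
        exact zpow_mem_of_invariant hAinv n _ hy'A
      calc F = closure (Set.range fun n : ℤ => (S ^ n) (x, y')) := (hFmin _ hy').symm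
        _ ⊆ closure A := closure_mono horbA
        _ = A := hAclosed.closure_eq
    -- thus every point of F can be shifted down by c
    have hstep : ∀ p ∈ F, (p.1, p.2 - c) ∈ F := by
      intro p hp
      obtain ⟨q, hq, hq'⟩ := hFsubA hp
      rw [hT, Prod.ext_iff] at hq'
      simp only at hq'
      obtain ⟨h1, h2⟩ := hq'
      have : q = (p.1, p.2 - c) := by
        rw [Prod.ext_iff]
        exact ⟨by simpa using h1, by simp; linarith⟩
      rwa [this] at hq
    have hiter : ∀ n : ℕ, (x, y - n * c) ∈ F := by
      intro n
      induction n with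
      | zero => simpa using hy
      | succ n ih =>
          have := hstep _ ih
          simpa [Nat.cast_add, Nat.cast_one, sub_sub, add_mul, one_mul] using this
    -- contradiction with boundedness of F
    have hKb : Bornology.IsBounded (Prod.snd '' F) := (hFc.image continuous_snd).isBounded
    obtain ⟨r, hr⟩ := hKb.subset_closedBall 0
    obtain ⟨n, hn⟩ := exists_nat_gt ((r + |y|) / |c|)
    have hmem : y - n * c ∈ Metric.closedBall (0 : ℝ) r := hr ⟨(x, y - n * c), hiter n, rfl⟩
    rw [Metric.mem_closedBall, Real.dist_eq, sub_zero] at hmem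
    have habs : (n : ℝ) * |c| ≤ |y - n * c| + |y| := by
      have h1 : |(n : ℝ) * c| - |y| ≤ |(n : ℝ) * c - y| := abs_sub_abs_le_abs_sub _ _
      rw [abs_sub_comm] at h1
      rw [abs_mul, abs_of_nonneg (Nat.cast_nonneg n : (0:ℝ) ≤ n)] at h1
      linarith
    have hcpos : (0 : ℝ) < |c| := abs_pos.mpr hc0
    rw [div_lt_iff₀ hcpos] at hn
    linarith
  -- define g by choice
  choose g hg using hfiber_ne
  -- graph characterization
  have hgraph : F = Set.range fun x : 𝕋 => (x, g x) := by
    apply Set.Subset.antisymm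
    · intro p hp
      refine ⟨p.1, ?_⟩
      have : g p.1 = p.2 := huniq p.1 (g p.1) p.2 (hg p.1) (by rwa [Prod.mk.eta])
      show (p.1, g p.1) = p
      rw [this, Prod.mk.eta]
    · rintro _ ⟨x, rfl⟩
      exact hg x
  -- continuity via compactness
  have hgc : Continuous g := by
    haveI : CompactSpace F := isCompact_iff_compactSpace.mp hFc
    let e : F ≃ 𝕋 :=
      { toFun := fun p => (p : 𝕋 × ℝ).1
        invFun := fun x => ⟨(x, g x), hg x⟩
        left_inv := by
          rintro ⟨p, hp⟩
          have : g p.1 = p.2 := huniq p.1 (g p.1) p.2 (hg p.1) (by rwa [Prod.mk.eta])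
          apply Subtype.ext
          simp [this, Prod.mk.eta]
        right_inv := fun x => rfl }
    have hec : Continuous e := continuous_fst.comp continuous_subtype_val
    let h : F ≃ₜ 𝕋 := Continuous.homeoOfEquivCompactToT2 (f := e) hec
    have : Continuous fun x : 𝕋 => ((h.symm x : 𝕋 × ℝ)).2 :=
      continuous_snd.comp (continuous_subtype_val.comp h.symm.continuous)
    exact this
  refine ⟨g, hgc, hgraph, fun x => ?_⟩
  -- cocycle equation
  have h1 : S (x, g x) ∈ F := hFinv ▸ ⟨(x, g x), hg x, rfl⟩
  have h2 : S (x, g x) = (x + α, g x + f x) := rfl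
  rw [h2] at h1
  have := huniq (x + α) (g x + f x) (g (x + α)) h1 (hg (x + α))
  linarith
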